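/- Let α ∈ T_n be an idempotent of rank l ≥ 3, and let T be an isolated subsemigroup of (T_n, *_α) containing an idempotent ε of rank k with 1 < k < l−1. Then T contains an idempotent of rank at most k−1. -/
import Mathlib


/-- The sandwich multiplication `β *_α γ = βαγ` (left-to-right composition). -/
def vmul {n : ℕ} (α β γ : Fin n → Fin n) : Fin n → Fin n :=
  fun x => γ (α (β x))

/-- `vpow α β m = β^{*(m+1)}`, the positive `*_α`-powers of `β`. -/
def vpow {n : ℕ} (α β : Fin n → Fin n) : ℕ → (Fin n → Fin n)
  | 0 => β
  | m + 1 => vmul α (vpow α β m) β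

/-- The rank of a transformation: the cardinality of its image. -/
def rank {n : ℕ} (f : Fin n → Fin n) : ℕ := (Finset.image f Finset.univ).card

/-- If an isolated subsemigroup `T` of `(T_n, *_α)` (with `rank α = l ≥ 3`)
contains an idempotent of rank `k` with `1 < k < l - 1`, then `T` contains an
idempotent of rank at most `k - 1`. -/
theorem isolated_contains_lower_rank_idempotent {n l k : ℕ} (α : Fin n → Fin n)
    (hα : ∀ x, α (α x) = α x) (hl : rank α = l) (hl3 : 3 ≤ l)
    (T : Set (Fin n → Fin n))
    (hT : ∀ x ∈ T, ∀ y ∈ T, vmul α x y ∈ T)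
    (hiso : ∀ (x : Fin n → Fin n) (m : ℕ), vpow α x m ∈ T → x ∈ T)
    (ε : Fin n → Fin n) (hεT : ε ∈ T) (hεidem : vmul α ε ε = ε)
    (hεrank : rank ε = k) (hk1 : 1 < k) (hk2 : k < l - 1) :
    ∃ ν ∈ T, vmul α ν ν = ν ∧ rank ν ≤ k - 1 := by
  classical
  have hε1 : ∀ t, ε (α (ε t)) = ε t := fun t => congrFun hεidem t
  -- the base B of ε
  set Bs : Finset (Fin n) := Finset.image (fun t => α (ε t)) Finset.univ with hBs_def
  set Ls : Finset (Fin n) := Finset.image α Finset.univ with hLs_def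
  have hmemB : ∀ t, α (ε t) ∈ Bs :=
    fun t => Finset.mem_image_of_mem _ (Finset.mem_univ t)
  have hBfix : ∀ w ∈ Bs, α (ε w) = w := by
    intro w hw
    rcases Finset.mem_image.mp hw with ⟨s, -, rfl⟩
    exact congrArg α (hε1 s)
  have hBsub : Bs ⊆ Ls := by
    intro w hw
    rcases Finset.mem_image.mp hw with ⟨s, -, rfl⟩
    exact Finset.mem_image.mpr ⟨ε s, Finset.mem_univ _, rfl⟩
  have hBcard : Bs.card = k := by
    apply le_antisymm
    · have h1 : Bs = (Finset.univ.image ε).image α := by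
        rw [Finset.image_image]; rfl
      calc Bs.card = ((Finset.univ.image ε).image α).card := by rw [h1]
        _ ≤ (Finset.univ.image ε).card := Finset.card_image_le
        _ = k := hεrank
    · have h1 : Finset.univ.image ε = Bs.image ε := by
        have h2 : Finset.univ.image ε
            = Finset.univ.image (ε ∘ (fun t => α (ε t))) := by
          congr 1
          funext t
          exact (hε1 t).symm
        rw [h2, ← Finset.image_image]
      calc k = (Finset.univ.image ε).card := hεrank.symm
        _ = (Bs.image ε).card := by rw [h1]
        _ ≤ Bs.card := Finset.card_image_le
  -- pick a ≠ a' outside B, inside im α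
  have hsd2 : 1 < (Ls \ Bs).card := by
    have hcs := Finset.card_sdiff_of_subset hBsub
    have hL : Ls.card = l := hl
    omega
  rcases Finset.one_lt_card.mp hsd2 with ⟨a, ha, a', ha', hane⟩
  have haB : a ∉ Bs := (Finset.mem_sdiff.mp ha).2
  have ha'B : a' ∉ Bs := (Finset.mem_sdiff.mp ha').2
  have hαa : α a = a := by
    rcases Finset.mem_image.mp (Finset.mem_sdiff.mp ha).1 with ⟨s, -, rfl⟩
    exact hα s
  have hαa' : α a' = a' := by
    rcases Finset.mem_image.mp (Finset.mem_sdiff.mp ha').1 with ⟨s, -, rfl⟩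
    exact hα s
  have hBna : ∀ w ∈ Bs, w ≠ a := fun w hw h => haB (h ▸ hw)
  have hBna' : ∀ w ∈ Bs, w ≠ a' := fun w hw h => ha'B (h ▸ hw)
  -- pick b₁ ∈ B, b₁ ≠ α (ε a)
  have hb₁ex : (Bs.erase (α (ε a))).Nonempty := by
    apply Finset.card_pos.mp
    rw [Finset.card_erase_of_mem (hmemB a), hBcard]
    omega
  rcases hb₁ex with ⟨b₁, hb₁⟩
  have hb₁ea : b₁ ≠ α (ε a) := (Finset.mem_erase.mp hb₁).1
  have hb₁B : b₁ ∈ Bs := (Finset.mem_erase.mp hb₁).2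
  -- swaps
  have hswap : ∀ u v : Fin n, ∃ σ : Fin n → Fin n,
      σ u = v ∧ σ v = u ∧ (∀ w, σ (σ w) = w) ∧ (∀ w, w ≠ u → w ≠ v → σ w = w) :=
    fun u v => ⟨Equiv.swap u v, Equiv.swap_apply_left u v, Equiv.swap_apply_right u v,
      fun w => Equiv.swap_apply_self u v w,
      fun w h1 h2 => Equiv.swap_apply_of_ne_of_ne h1 h2⟩
  obtain ⟨τ, hτ1, hτ2, hτ3, hτ4⟩ := hswap (α (ε a)) (α (ε a'))
  obtain ⟨π, hπ1, hπ2, hπ3, hπ4⟩ := hswap b₁ a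
  have hτB : ∀ w ∈ Bs, τ w ∈ Bs := by
    intro w hw
    by_cases h1 : w = α (ε a)
    · rw [h1, hτ1]; exact hmemB a'
    by_cases h2 : w = α (ε a')
    · rw [h2, hτ2]; exact hmemB a
    · rw [hτ4 w h1 h2]; exact hw
  -- the two square roots of ε
  obtain ⟨x, hx_def⟩ : ∃ x' : Fin n → Fin n,
      x' = fun t => if t = a' then a else if t = a then ε a' else ε (τ (α (ε t))) :=
    ⟨_, rfl⟩
  obtain ⟨y, hy_def⟩ : ∃ y' : Fin n → Fin n,
      y' = fun t => if t = a then a' else if t = a' then ε a else ε (τ (α (ε t))) :=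
    ⟨_, rfl⟩
  have hxa' : x a' = a := by rw [hx_def]; simp
  have hxa : x a = ε a' := by rw [hx_def]; simp [hane]
  have hxgen : ∀ t, t ≠ a' → t ≠ a → x t = ε (τ (α (ε t))) := by
    intro t h1 h2; rw [hx_def]; simp [h1, h2]
  have hya : y a = a' := by rw [hy_def]; simp
  have hya' : y a' = ε a := by rw [hy_def]; simp [hane.symm]
  have hygen : ∀ t, t ≠ a → t ≠ a' → y t = ε (τ (α (ε t))) := by
    intro t h1 h2; rw [hy_def]; simp [h1, h2]
  have hxB : ∀ w ∈ Bs, x w = ε (τ w) := by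
    intro w hw
    rw [hxgen w (hBna' w hw) (hBna w hw), hBfix w hw]
  have hyB : ∀ w ∈ Bs, y w = ε (τ w) := by
    intro w hw
    rw [hygen w (hBna w hw) (hBna' w hw), hBfix w hw]
  -- x * x = ε
  have hxx : vmul α x x = ε := by
    funext t
    show x (α (x t)) = ε t
    by_cases h1 : t = a'
    · rw [h1, hxa', hαa, hxa]
    by_cases h2 : t = a
    · rw [h2, hxa]
      have hb := hmemB a'
      rw [hxB _ hb, hτ2, hε1 a]
    · rw [hxgen t h1 h2]
      have hb : τ (α (ε t)) ∈ Bs := hτB _ (hmemB t)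
      rw [hBfix _ hb, hxB _ hb, hτ3, hε1 t]
  have hyy : vmul α y y = ε := by
    funext t
    show y (α (y t)) = ε t
    by_cases h1 : t = a
    · rw [h1, hya, hαa', hya']
    by_cases h2 : t = a'
    · rw [h2, hya']
      have hb := hmemB a
      rw [hyB _ hb, hτ1, hε1 a']
    · rw [hygen t h1 h2]
      have hb : τ (α (ε t)) ∈ Bs := hτB _ (hmemB t)
      rw [hBfix _ hb, hyB _ hb, hτ3, hε1 t]
  -- x, y ∈ T by isolation
  have hxT : x ∈ T := by
    apply hiso x 1
    have h1 : vpow α x 1 = vmul α x x := rfl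
    rw [h1, hxx]; exact hεT
  have hyT : y ∈ T := by
    apply hiso y 1
    have h1 : vpow α y 1 = vmul α y y := rfl
    rw [h1, hyy]; exact hεT
  -- g = y * x is ε with a glued fixed point a
  obtain ⟨g, hg_def⟩ : ∃ g' : Fin n → Fin n,
      g' = fun t => if t = a then a else ε t := ⟨_, rfl⟩
  have hga : g a = a := by rw [hg_def]; simp
  have hggen : ∀ t, t ≠ a → g t = ε t := by
    intro t h1; rw [hg_def]; simp [h1]
  have hyx : vmul α y x = g := by
    funext t
    show x (α (y t)) = g t
    by_cases h1 : t = a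
    · rw [h1, hya, hαa', hxa', hga]
    by_cases h2 : t = a'
    · rw [h2, hya']
      have hb := hmemB a
      rw [hxB _ hb, hτ1, hε1 a', hggen a' (Ne.symm hane)]
    · rw [hygen t h1 h2]
      have hb : τ (α (ε t)) ∈ Bs := hτB _ (hmemB t)
      rw [hBfix _ hb, hxB _ hb, hτ3, hε1 t, hggen t h1]
  have hgT : g ∈ T := hyx ▸ hT y hyT x hxT
  have hgB : ∀ w ∈ Bs, g w = ε w := fun w hw => hggen w (hBna w hw)
  -- z, a square root of g
  obtain ⟨z, hz_def⟩ : ∃ z' : Fin n → Fin n,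
      z' = fun t => g (π (α (g t))) := ⟨_, rfl⟩
  have hzval : ∀ t, z t = g (π (α (g t))) := fun t => by rw [hz_def]
  -- key: α (g (π s)) = π s for s ∈ Bs ∪ {a}
  have hαgπ : ∀ s, (s ∈ Bs ∨ s = a) → α (g (π s)) = π s := by
    intro s hs
    rcases hs with hs | rfl
    · by_cases hsb : s = b₁
      · rw [hsb, hπ1, hga, hαa]
      · rw [hπ4 s hsb (hBna s hs), hgB s hs, hBfix s hs]
    · rw [hπ2, hgB b₁ hb₁B, hBfix b₁ hb₁B]
  have hπpre : ∀ s, (s ∈ Bs ∨ s = a) → (π s ∈ Bs ∨ π s = a) := by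
    intro s hs
    rcases hs with hs | rfl
    · by_cases hsb : s = b₁
      · right; rw [hsb, hπ1]
      · left; rw [hπ4 s hsb (hBna s hs)]; exact hs
    · left; rw [hπ2]; exact hb₁B
  have hαgmem : ∀ t, (α (g t) ∈ Bs ∨ α (g t) = a) := by
    intro t
    by_cases h1 : t = a
    · right; rw [h1, hga, hαa]
    · left; rw [hggen t h1]; exact hmemB t
  have hzz : vmul α z z = g := by
    funext t
    show z (α (z t)) = g t
    have hs := hαgmem t
    have h1 : α (z t) = π (α (g t)) := by rw [hzval t, hαgπ _ hs]
    rw [h1, hzval (π (α (g t))), hαgπ _ hs, hπ3]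
    by_cases h2 : t = a
    · rw [h2, hga, hαa, hga]
    · rw [hggen t h2]
      have hb := hmemB t
      rw [hgB _ hb, hε1 t]
  have hzT : z ∈ T := by
    apply hiso z 1
    have h1 : vpow α z 1 = vmul α z z := rfl
    rw [h1, hzz]; exact hgT
  -- ν = ε * z * ε
  have hνT : vmul α (vmul α ε z) ε ∈ T := hT _ (hT ε hεT z hzT) ε hεT
  obtain ⟨ν, hν_def⟩ : ∃ ν' : Fin n → Fin n, ν' = vmul α (vmul α ε z) ε := ⟨_, rfl⟩
  have hνT' : ν ∈ T := hν_def ▸ hνT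
  have hνval : ∀ t, ν t = ε (π (α (ε t))) := by
    intro t
    have h0 : ν t = ε (α (z (α (ε t)))) := by rw [hν_def]; rfl
    have hb : α (ε t) ∈ Bs := hmemB t
    have h1 : z (α (ε t)) = g (π (α (ε t))) := by
      rw [hzval, hgB _ hb, hBfix _ hb]
    rw [h0, h1, hαgπ _ (Or.inl hb)]
  -- ν is idempotent
  have hνidem : vmul α ν ν = ν := by
    funext t
    show ν (α (ν t)) = ν t
    by_cases hbt : α (ε t) = b₁
    · rw [hνval t, hbt, hπ1, hνval (α (ε a)), hBfix _ (hmemB a),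
        hπ4 _ (Ne.symm hb₁ea) (hBna _ (hmemB a)), hε1 a]
    · rw [hνval t, hπ4 _ hbt (hBna _ (hmemB t)), hBfix _ (hmemB t),
        hνval (α (ε t)), hBfix _ (hmemB t), hπ4 _ hbt (hBna _ (hmemB t))]
  -- rank bound
  have hsub : Finset.image ν Finset.univ ⊆ Finset.image ε (Bs.erase b₁) := by
    intro v hv
    rcases Finset.mem_image.mp hv with ⟨t, -, rfl⟩
    rw [Finset.mem_image]
    by_cases hbt : α (ε t) = b₁
    · refine ⟨α (ε a), Finset.mem_erase.mpr ⟨Ne.symm hb₁ea, hmemB a⟩, ?_⟩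
      rw [hνval t, hbt, hπ1]
      exact hε1 a
    · refine ⟨α (ε t), Finset.mem_erase.mpr ⟨hbt, hmemB t⟩, ?_⟩
      rw [hνval t, hπ4 _ hbt (hBna _ (hmemB t))]
  have hrank : rank ν ≤ k - 1 := by
    calc rank ν ≤ (Finset.image ε (Bs.erase b₁)).card := Finset.card_le_card hsub
      _ ≤ (Bs.erase b₁).card := Finset.card_image_le
      _ = k - 1 := by rw [Finset.card_erase_of_mem hb₁B, hBcard]
  exact ⟨ν, hνT', hνidem, hrank⟩
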